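/- arXiv:2011.05011 — 6 statements merged into one kernel-verified Lean document; each statement's English description precedes it below -/
import Mathlib

section
/- Let P be a group of nilpotency class 3 and let E_2(P) = {x ∈ P : [x,y,y] = 1 for all y ∈ P}. Then E_2(P) is a characteristic subgroup of P containing the second center Z_2(P). -/
/-!
In a group of class at most 3 we have `Z₃(G) = G`, so every double commutator
`⁅⁅a, b⁆, c⁆` is central. This makes `x ↦ ⁅⁅x, y⁆, z⁆` a homomorphism, so the 2-Engel
condition is closed under products and inverses. Invariance under automorphisms and
`Z₂(G) ⊆ E₂(G)` hold in every group.
-/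

open scoped commutatorElement

section

variable {G : Type*} [Group G]

theorem commutatorElement_mul_left_of_mem_center {u v z : G}
    (h : ⁅v, z⁆ ∈ Subgroup.center G) :
    ⁅u * v, z⁆ = ⁅u, z⁆ * ⁅v, z⁆ := by
  rw [commutatorElement_mul_left_eq_conj_mul, Subgroup.mem_center_iff.mp h u, mul_inv_cancel_right,
    Subgroup.mem_center_iff.mp h]

theorem commutatorElement_commutatorElement_mem_center (hG : Subgroup.upperCentralSeries G 3 = ⊤)
    (a b c : G) : ⁅⁅a, b⁆, c⁆ ∈ Subgroup.center G := by
  have ha : a ∈ Subgroup.upperCentralSeries G 3 := hG ▸ Subgroup.mem_top a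
  rw [← Subgroup.upperCentralSeries_one]
  exact Subgroup.mem_upperCentralSeries_succ_iff.mp
    (Subgroup.mem_upperCentralSeries_succ_iff.mp ha b) c

theorem commutatorElement_conj_commutatorElement_left (hG : Subgroup.upperCentralSeries G 3 = ⊤)
    (a b y z : G) : ⁅a * ⁅b, y⁆ * a⁻¹, z⁆ = ⁅⁅b, y⁆, z⁆ := by
  have hconj : a * ⁅b, y⁆ * a⁻¹ = ⁅a, ⁅b, y⁆⁆ * ⁅b, y⁆ := by group
  have hcentral : ⁅a, ⁅b, y⁆⁆ ∈ Subgroup.center G := by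
    rw [← commutatorElement_inv]
    exact inv_mem (commutatorElement_commutatorElement_mem_center hG b y a)
  rw [hconj, commutatorElement_mul_left_of_mem_center
      (commutatorElement_commutatorElement_mem_center hG b y z),
    commutatorElement_eq_one_iff_mul_comm.mpr (Subgroup.mem_center_iff.mp hcentral z).symm, one_mul]

theorem commutatorElement_commutatorElement_mul_left (hG : Subgroup.upperCentralSeries G 3 = ⊤)
    (a b y z : G) : ⁅⁅a * b, y⁆, z⁆ = ⁅⁅a, y⁆, z⁆ * ⁅⁅b, y⁆, z⁆ := by
  have hcentral := commutatorElement_commutatorElement_mem_center hG a y z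
  rw [commutatorElement_mul_left_eq_conj_mul, commutatorElement_mul_left_of_mem_center hcentral,
    commutatorElement_conj_commutatorElement_left hG, Subgroup.mem_center_iff.mp hcentral]

def IsRightTwoEngel (x : G) : Prop :=
  ∀ y : G, ⁅⁅x, y⁆, y⁆ = 1

theorem IsRightTwoEngel.map_mulEquiv {G' : Type*} [Group G'] (φ : G ≃* G') {x : G}
    (hx : IsRightTwoEngel x) : IsRightTwoEngel (φ x) := by
  intro y
  simpa [map_commutatorElement] using congrArg φ (hx (φ.symm y))

theorem isRightTwoEngel_of_mem_upperCentralSeries_two {x : G}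
    (hx : x ∈ Subgroup.upperCentralSeries G 2) : IsRightTwoEngel x := by
  intro y
  have hcentral : ⁅x, y⁆ ∈ Subgroup.center G := by
    rw [← Subgroup.upperCentralSeries_one]
    exact Subgroup.mem_upperCentralSeries_succ_iff.mp hx y
  exact commutatorElement_eq_one_iff_mul_comm.mpr (Subgroup.mem_center_iff.mp hcentral y).symm

theorem IsRightTwoEngel.mul (hG : Subgroup.upperCentralSeries G 3 = ⊤) {x x' : G}
    (hx : IsRightTwoEngel x) (hx' : IsRightTwoEngel x') : IsRightTwoEngel (x * x') := by
  intro y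
  rw [commutatorElement_commutatorElement_mul_left hG, hx y, hx' y, one_mul]

theorem IsRightTwoEngel.inv (hG : Subgroup.upperCentralSeries G 3 = ⊤) {x : G}
    (hx : IsRightTwoEngel x) : IsRightTwoEngel x⁻¹ := by
  intro y
  have h := commutatorElement_commutatorElement_mul_left hG x x⁻¹ y y
  rwa [mul_inv_cancel, commutatorElement_one_left, commutatorElement_one_left, hx y, one_mul,
    eq_comm] at h

def rightTwoEngelSubgroup (hG : Subgroup.upperCentralSeries G 3 = ⊤) : Subgroup G where
  carrier := {x | IsRightTwoEngel x}
  one_mem' y := by rw [commutatorElement_one_left, commutatorElement_one_left]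
  mul_mem' := IsRightTwoEngel.mul hG
  inv_mem' := IsRightTwoEngel.inv hG

theorem rightTwoEngelSubgroup_characteristic (hG : Subgroup.upperCentralSeries G 3 = ⊤) :
    (rightTwoEngelSubgroup hG).Characteristic :=
  Subgroup.characteristic_iff_le_comap.mpr fun φ _ hx => hx.map_mulEquiv φ

end

/-- For a group `P` of nilpotency class 3, the set
`E₂(P) = {x ∈ P | [x,y,y] = 1 for all y ∈ P}` is a characteristic subgroup of `P`
containing the second centre `Z₂(P)`. -/
theorem E2_is_characteristic_subgroup_containing_Z2
    (P : Type*) [Group P] [Group.IsNilpotent P]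
    (h : Group.nilpotencyClass P = 3) :
    ∃ H : Subgroup P,
      (H : Set P) = {x : P | ∀ y : P, ⁅⁅x, y⁆, y⁆ = 1} ∧
      H.Characteristic ∧
      upperCentralSeries P 2 ≤ H := by
  have hP : Subgroup.upperCentralSeries P 3 = ⊤ :=
    Subgroup.upperCentralSeries_eq_top_iff_nilpotencyClass_le.mpr h.le
  exact ⟨rightTwoEngelSubgroup hP, rfl, rightTwoEngelSubgroup_characteristic hP,
    fun _ hx => isRightTwoEngel_of_mem_upperCentralSeries_two hx⟩
end

section
/- Let p be a prime, S a p-group, and E, K ≤ S subgroups such that EK is a subgroup of S. If N_K(E) ≤ E, then K ≤ E. -/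
open scoped Pointwise

/-! If `ek ∈ EK` normalizes `E` then so does `k`, so `N_{EK}(E) ≤ E`. But `EK` is a finite
`p`-group, hence nilpotent, and in a nilpotent group a proper subgroup is strictly contained
in its normalizer; thus `E = EK ⊇ K`. -/

namespace Subgroup

variable {G : Type*} [Group G] {E K H : Subgroup G}

theorem inf_normalizer_le_of_coe_eq_mul (hH : (H : Set G) = (E : Set G) * (K : Set G))
    (hK : K ⊓ normalizer (E : Set G) ≤ E) : H ⊓ normalizer (E : Set G) ≤ E := by
  rintro _ ⟨hxH, hxN⟩
  obtain ⟨e, he, k, hk, rfl⟩ : _ ∈ (E : Set G) * (K : Set G) := hH ▸ hxH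
  have hkN : k ∈ normalizer (E : Set G) := by
    simpa using mul_mem (inv_mem (le_normalizer he)) hxN
  exact mul_mem he (hK ⟨hk, hkN⟩)

theorem le_of_inf_normalizer_le [Group.IsNilpotent H] (hEH : E ≤ H)
    (hN : H ⊓ normalizer (E : Set G) ≤ E) : H ≤ E := by
  have hself : normalizer (E.subgroupOf H) = E.subgroupOf H := by
    refine le_antisymm ?_ le_normalizer
    rw [← subgroupOf_normalizer_eq hEH, ← inf_subgroupOf_left]
    exact comap_mono hN
  rw [← subgroupOf_eq_top]
  exact normalizerCondition_iff_only_full_group_self_normalizing.mp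
    Group.normalizerCondition_of_isNilpotent _ hself

end Subgroup

/-- Let `p` be a prime, `S` a finite `p`-group, and `E, K ≤ S` subgroups such that the
set product `EK` is a subgroup of `S`.  If `N_K(E) ≤ E`, then `K ≤ E`. -/
theorem le_of_normalizer_inter_le
    (p : ℕ) (hp : p.Prime) (S : Type*) [Group S] [Finite S] (hS : IsPGroup p S)
    (E K : Subgroup S)
    (hEK : ∃ H : Subgroup S, (H : Set S) = (E : Set S) * (K : Set S))
    (hN : K ⊓ Subgroup.normalizer (E : Set S) ≤ E) :
    K ≤ E := by
  obtain ⟨H, hH⟩ := hEK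
  have : Fact p.Prime := ⟨hp⟩
  have : Group.IsNilpotent H := (hS.to_subgroup H).isNilpotent
  have hEH : E ≤ H := SetLike.coe_subset_coe.mp (hH ▸ Set.subset_mul_left _ K.one_mem)
  have hKH : K ≤ H := SetLike.coe_subset_coe.mp (hH ▸ Set.subset_mul_right _ E.one_mem)
  exact hKH.trans <| Subgroup.le_of_inf_normalizer_le hEH <|
    Subgroup.inf_normalizer_le_of_coe_eq_mul hH hN
end

section
/- Let p be a prime, H a finite group, and M a strongly p-embedded subgroup of H. If K ≤ M is a subnormal subgroup of H, then K is a p'-group (its order is coprime to p). -/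
/-!
If `K ≤ M` has order divisible by `p`, then every `h` normalizing `K` satisfies
`K ≤ M ∩ M^h`, which forces `h ∈ M`; so a strongly `p`-embedded `M` contains `N_H(K)`.
Climbing a subnormal series `K = K₀ ⊴ K₁ ⊴ ⋯ ⊴ Kₙ = H`, each `Kᵢ₊₁ ≤ N_H(Kᵢ)` stays
inside `M` and still has order divisible by `p`, so `H ≤ M`, contradicting properness.
-/

/-- `M` is a strongly `p`-embedded subgroup of `H`: it is a proper subgroup of order
divisible by `p` such that `M ∩ M^h` has order coprime to `p` for all `h ∈ H \ M`. -/
def IsStronglyPEmbedded (p : ℕ) {H : Type*} [Group H] (M : Subgroup H) : Prop :=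
  M ≠ ⊤ ∧ p ∣ Nat.card M ∧
    ∀ h : H, h ∉ M →
      ¬ p ∣ Nat.card ↥(M ⊓ Subgroup.map (MulEquiv.toMonoidHom (MulAut.conj h)) M)

/-- `K` is a subnormal subgroup of `H`. -/
def IsSubnormalSubgroup {H : Type*} [Group H] (K : Subgroup H) : Prop :=
  ∃ (n : ℕ) (c : ℕ → Subgroup H), c 0 = K ∧ c n = ⊤ ∧
    ∀ i < n, c i ≤ c (i + 1) ∧ ((c i).subgroupOf (c (i + 1))).Normal

section

variable {H : Type*} [Group H]

theorem IsStronglyPEmbedded.normalizer_le {p : ℕ} {M L : Subgroup H}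
    (hM : IsStronglyPEmbedded p M) (hLM : L ≤ M) (hpL : p ∣ Nat.card L) :
    Subgroup.normalizer (L : Set H) ≤ M := by
  intro h hh
  by_contra hhM
  have hL_conj : L.map (MulEquiv.toMonoidHom (MulAut.conj h)) = L :=
    Subgroup.mem_normalizer_iff_map_conj_eq.mp hh
  have hL_le : L ≤ M ⊓ Subgroup.map (MulEquiv.toMonoidHom (MulAut.conj h)) M :=
    le_inf hLM (hL_conj ▸ Subgroup.map_mono hLM)
  exact hM.2.2 h hhM (hpL.trans (Subgroup.card_dvd_of_le hL_le))

theorem IsSubnormalSubgroup.eq_top_of_normalizer_le {K M : Subgroup H}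
    (hK : IsSubnormalSubgroup K) (hKM : K ≤ M)
    (hN : ∀ L : Subgroup H, K ≤ L → L ≤ M → Subgroup.normalizer (L : Set H) ≤ M) : M = ⊤ := by
  obtain ⟨n, c, hc0, hcn, hstep⟩ := hK
  have hc : ∀ i ≤ n, K ≤ c i ∧ c i ≤ M := by
    intro i hi
    induction i with
    | zero => exact ⟨hc0.ge, hc0.le.trans hKM⟩
    | succ i ih =>
      obtain ⟨hKc, hcM⟩ := ih (by omega)
      obtain ⟨hle, hnormal⟩ := hstep i (by omega)
      have hle_normalizer := (Subgroup.normal_subgroupOf_iff_le_normalizer hle).mp hnormal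
      exact ⟨hKc.trans hle, hle_normalizer.trans (hN _ hKc hcM)⟩
  exact top_le_iff.mp (hcn ▸ (hc n le_rfl).2)

end

theorem subnormal_subgroup_of_strongly_p_embedded_is_p'_group_general
    (p : ℕ) (H : Type*) [Group H]
    (M : Subgroup H) (hM : IsStronglyPEmbedded p M)
    (K : Subgroup H) (hKM : K ≤ M) (hK : IsSubnormalSubgroup K) :
    ¬ p ∣ Nat.card K := by
  intro hpK
  refine hM.1 (hK.eq_top_of_normalizer_le hKM fun L hKL hLM => ?_)
  exact hM.normalizer_le hLM (hpK.trans (Subgroup.card_dvd_of_le hKL))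

/-- If `M` is strongly `p`-embedded in a finite group `H` and `K ≤ M` is subnormal in
`H`, then `K` is a `p'`-group. -/
theorem subnormal_subgroup_of_strongly_p_embedded_is_p'_group
    (p : ℕ) (hp : p.Prime) (H : Type*) [Group H] [Finite H]
    (M : Subgroup H) (hM : IsStronglyPEmbedded p M)
    (K : Subgroup H) (hKM : K ≤ M) (hK : IsSubnormalSubgroup K) :
    ¬ p ∣ Nat.card K :=
  subnormal_subgroup_of_strongly_p_embedded_is_p'_group_general p H M hM K hKM hK
end

section
/- Let p be a prime, H a finite group with a strongly p-embedded subgroup, and K a normal subgroup of H that commutes with some element of order p in H. Then H/K has a strongly p-embedded subgroup. -/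
namespace Subgroup

variable {G Q : Type*} [Group G] [Group Q]

theorem Normal.le_map_conj {K M : Subgroup G} [K.Normal] (hKM : K ≤ M) (g : G) :
    K ≤ M.map (MulAut.conj g).toMonoidHom :=
  Normal.map_conj_eq K g ▸ map_mono hKM

theorem map_conj_map (f : G →* Q) (g : G) (M : Subgroup G) :
    (M.map f).map (MulAut.conj (f g)).toMonoidHom =
      (M.map (MulAut.conj g).toMonoidHom).map f := by
  rw [map_map, map_map]
  congr 1
  ext
  simp

theorem map_inf_of_ker_le {f : G →* Q} (hf : Function.Surjective f) {A B : Subgroup G}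
    (hA : f.ker ≤ A) (hB : f.ker ≤ B) : (A ⊓ B).map f = A.map f ⊓ B.map f := by
  conv_rhs => rw [← map_comap_eq_self_of_surjective hf (A.map f ⊓ B.map f)]
  rw [comap_inf, comap_map_eq_self hA, comap_map_eq_self hB]

theorem card_eq_card_map_mul_card_ker [Finite G] {f : G →* Q} (hf : Function.Surjective f)
    {M : Subgroup G} (hM : f.ker ≤ M) : Nat.card M = Nat.card (M.map f) * Nat.card f.ker := by
  have hG := M.card_mul_index
  have hQ := (M.map f).card_mul_index
  have hker := f.ker.card_mul_index
  rw [index_map_eq M hf hM] at hQ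
  rw [index_ker, f.range_eq_top_of_surjective hf, card_top] at hker
  refine Nat.eq_of_mul_eq_mul_right (Nat.pos_of_ne_zero M.index_ne_zero_of_finite) ?_
  rw [hG, ← hker, ← hQ]
  ring

theorem mem_fixedPoints_iff_le_stabilizer {α : Type*} [MulAction G α] {P : Subgroup G} {a : α} :
    a ∈ MulAction.fixedPoints P α ↔ P ≤ MulAction.stabilizer G a :=
  ⟨fun h g hg => h ⟨g, hg⟩, fun h g => h g.2⟩

theorem stabilizer_mk_eq_map_conj (M : Subgroup G) (g : G) :
    MulAction.stabilizer G (g : G ⧸ M) = M.map (MulAut.conj g).toMonoidHom := by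
  have hg : (g : G ⧸ M) = g • ((1 : G) : G ⧸ M) := by
    rw [MulAction.Quotient.smul_coe, smul_eq_mul, mul_one]
  rw [hg, MulAction.stabilizer_smul_eq_stabilizer_map_conj, MulAction.stabilizer_quotient]

end Subgroup

theorem IsPGroup.zpowers_of_orderOf_eq {p : ℕ} {G : Type*} [Group G] {y : G}
    (hy : orderOf y = p) : IsPGroup p (Subgroup.zpowers y) :=
  IsPGroup.of_card (by rw [Nat.card_zpowers, hy, pow_one])

namespace IsStronglyPEmbedded

open Subgroup

variable {p : ℕ} {G Q : Type*} [Group G] [Group Q] {M : Subgroup G}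

theorem mem_of_mem_map_conj (hM : IsStronglyPEmbedded p M) {y g : G} (hyM : y ∈ M)
    (hy : p ∣ orderOf y) (hyg : y ∈ M.map (MulAut.conj g).toMonoidHom) : g ∈ M := by
  by_contra hg
  exact hM.2.2 g hg (hy.trans (orderOf_dvd_natCard _ ⟨hyM, hyg⟩))

theorem centralizer_le (hM : IsStronglyPEmbedded p M) {x : G} (hxM : x ∈ M)
    (hx : p ∣ orderOf x) : centralizer {x} ≤ M := fun g hg =>
  hM.mem_of_mem_map_conj hxM hx
    ⟨x, hxM, by simp [mem_centralizer_singleton_iff.mp hg, mul_assoc]⟩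

theorem not_dvd_card_of_normal_le (hM : IsStronglyPEmbedded p M) {K : Subgroup G} [K.Normal]
    (hKM : K ≤ M) : ¬ p ∣ Nat.card K := by
  obtain ⟨g, hg⟩ := SetLike.exists_not_mem_of_ne_top M hM.1
  exact fun hK =>
    hM.2.2 g hg (hK.trans (card_dvd_of_le (le_inf hKM (Normal.le_map_conj hKM g))))

theorem fixedPoints_zpowers_eq (hM : IsStronglyPEmbedded p M) {y : G} (hyM : y ∈ M)
    (hy : orderOf y = p) :
    MulAction.fixedPoints (zpowers y) (G ⧸ M) = {((1 : G) : G ⧸ M)} := by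
  ext q
  induction q using QuotientGroup.induction_on with | H g => ?_
  refine mem_fixedPoints_iff_le_stabilizer.trans ?_
  rw [stabilizer_mk_eq_map_conj, zpowers_le, Set.mem_singleton_iff, QuotientGroup.eq, mul_one,
    inv_mem_iff]
  refine ⟨hM.mem_of_mem_map_conj hyM hy.symm.dvd, fun hg => ?_⟩
  exact ⟨g⁻¹ * y * g, mul_mem (mul_mem (inv_mem hg) hyM) hg, by simp [mul_assoc]⟩

variable [Finite G] [Fact p.Prime]

theorem index_modEq_one (hM : IsStronglyPEmbedded p M) : M.index ≡ 1 [MOD p] := by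
  obtain ⟨⟨y, hyM⟩, hy⟩ := exists_prime_orderOf_dvd_card' p hM.2.1
  rw [orderOf_mk] at hy
  have := (IsPGroup.zpowers_of_orderOf_eq hy).card_modEq_card_fixedPoints (G ⧸ M)
  rwa [hM.fixedPoints_zpowers_eq hyM hy, Nat.card_coe_set_eq, Set.ncard_singleton] at this

theorem exists_le_map_conj (hM : IsStronglyPEmbedded p M) {P : Subgroup G}
    (hP : IsPGroup p P) : ∃ g : G, P ≤ M.map (MulAut.conj g).toMonoidHom := by
  have hindex : ¬ p ∣ M.index := fun hdvd =>
    (Fact.out : p.Prime).not_dvd_one ((hM.index_modEq_one.dvd_iff dvd_rfl).mp hdvd)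
  obtain ⟨q, hq⟩ := hP.nonempty_fixed_point_of_prime_not_dvd_card (G ⧸ M) hindex
  induction q using QuotientGroup.induction_on with | H g => ?_
  exact ⟨g, stabilizer_mk_eq_map_conj M g ▸ mem_fixedPoints_iff_le_stabilizer.mp hq⟩

theorem map_of_surjective (hM : IsStronglyPEmbedded p M) {f : G →* Q}
    (hf : Function.Surjective f) (hker : f.ker ≤ M) (hp_ker : ¬ p ∣ Nat.card f.ker) :
    IsStronglyPEmbedded p (M.map f) := by
  refine ⟨fun htop => hM.1 ?_, ?_, ?_⟩
  · rw [← comap_map_eq_self hker, htop, comap_top]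
  · have hdvd := hM.2.1
    rw [card_eq_card_map_mul_card_ker hf hker] at hdvd
    exact ((Fact.out : p.Prime).dvd_mul.mp hdvd).resolve_right hp_ker
  · intro q hq
    obtain ⟨g, rfl⟩ := hf q
    have hg : g ∉ M := fun hg => hq (mem_map_of_mem f hg)
    rw [map_conj_map, ← map_inf_of_ker_le hf hker (Normal.le_map_conj hker g)]
    exact fun hdvd => hM.2.2 g hg (hdvd.trans (card_map_dvd _ _))

theorem map_conj (hM : IsStronglyPEmbedded p M) (g : G) :
    IsStronglyPEmbedded p (M.map (MulAut.conj g).toMonoidHom) := by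
  have hker : (MulAut.conj g).toMonoidHom.ker = ⊥ :=
    (MonoidHom.ker_eq_bot_iff _).mpr (MulAut.conj g).injective
  refine hM.map_of_surjective (MulAut.conj g).surjective (hker ▸ bot_le) ?_
  rw [hker, card_bot]
  exact (Fact.out : p.Prime).not_dvd_one

end IsStronglyPEmbedded

/-- If a finite group `H` has a strongly `p`-embedded subgroup and `K` is a normal
subgroup of `H` commuting with some element of order `p`, then `H/K` has a strongly
`p`-embedded subgroup. -/
theorem quotient_has_strongly_p_embedded
    (p : ℕ) (hp : p.Prime) (H : Type*) [Group H] [Finite H]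
    (hSE : ∃ M : Subgroup H, IsStronglyPEmbedded p M)
    (K : Subgroup H) [K.Normal]
    (x : H) (hx : orderOf x = p) (hcomm : ∀ k ∈ K, Commute k x) :
    ∃ M' : Subgroup (H ⧸ K), IsStronglyPEmbedded p M' := by
  have := Fact.mk hp
  obtain ⟨M, hM⟩ := hSE
  obtain ⟨g, hxg⟩ := hM.exists_le_map_conj (IsPGroup.zpowers_of_orderOf_eq hx)
  set M₁ := M.map (MulAut.conj g).toMonoidHom
  have hM₁ : IsStronglyPEmbedded p M₁ := hM.map_conj g
  have hKM₁ : K ≤ M₁ := fun k hk =>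
    hM₁.centralizer_le (Subgroup.zpowers_le.mp hxg) hx.symm.dvd
      (Subgroup.mem_centralizer_singleton_iff.mpr (hcomm k hk).eq)
  have hK : ¬ p ∣ Nat.card K := hM₁.not_dvd_card_of_normal_le hKM₁
  refine ⟨M₁.map (QuotientGroup.mk' K), hM₁.map_of_surjective (QuotientGroup.mk'_surjective K)
    ?_ ?_⟩ <;> rwa [QuotientGroup.ker_mk']
end

section
/- Let P be a regular p-group, T a subgroup of P containing the derived subgroup P', and suppose P = T·Ω_1(P). Then ℧^1(P) = ℧^1(T), i.e. the subgroup generated by p-th powers of elements of P equals the subgroup generated by p-th powers of elements of T. -/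
/-!
Regularity writes `(xy)^p` as `x^p y^p` times `p`-th powers of commutators, and those lie in
`℧¹(T)` because `P' ≤ T`. Hence the elements whose `p`-th power lies in `℧¹(T)` form a subgroup.
It contains `T` and every element of order dividing `p`, so it is `T·Ω₁(P) = P`.
-/

/-- `P` is a regular `p`-group: for all `x, y ∈ P` there are elements
`g₁, …, g_t` of the derived subgroup of `⟨x, y⟩` with
`(xy)^p = x^p y^p g₁^p ⋯ g_t^p`. -/
def IsRegularPGroup (p : ℕ) (P : Type*) [Group P] : Prop :=
  ∀ x y : P, ∃ l : List P,
    (∀ g ∈ l, g ∈ ⁅Subgroup.closure ({x, y} : Set P), Subgroup.closure ({x, y} : Set P)⁆) ∧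
    (x * y) ^ p = x ^ p * y ^ p * (l.map (· ^ p)).prod

/-- `℧¹(T)`: the subgroup generated by the `p`-th powers of the elements of `T`. -/
def agemo (p : ℕ) {P : Type*} [Group P] (T : Subgroup P) : Subgroup P :=
  Subgroup.closure {y : P | ∃ x ∈ T, y = x ^ p}

section Agemo

variable {p : ℕ} {P : Type*} [Group P] {T : Subgroup P}

theorem pow_mem_agemo {x : P} (hx : x ∈ T) : x ^ p ∈ agemo p T :=
  Subgroup.subset_closure ⟨x, hx, rfl⟩

theorem agemo_mono {S : Subgroup P} (h : S ≤ T) : agemo p S ≤ agemo p T :=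
  Subgroup.closure_mono fun _ ⟨x, hx, hy⟩ => ⟨x, h hx, hy⟩

theorem list_prod_map_pow_mem_agemo {l : List P} (hl : ∀ g ∈ l, g ∈ T) :
    (l.map (· ^ p)).prod ∈ agemo p T :=
  Subgroup.list_prod_mem _ fun _ hx => by
    obtain ⟨g, hg, rfl⟩ := List.mem_map.1 hx
    exact pow_mem_agemo (hl g hg)

theorem IsRegularPGroup.mul_pow_mem_agemo (hreg : IsRegularPGroup p P)
    (hT : ⁅(⊤ : Subgroup P), (⊤ : Subgroup P)⁆ ≤ T) {x y : P}
    (hx : x ^ p ∈ agemo p T) (hy : y ^ p ∈ agemo p T) : (x * y) ^ p ∈ agemo p T := by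
  obtain ⟨l, hl, hxy⟩ := hreg x y
  have hlT : ∀ g ∈ l, g ∈ T := fun g hg =>
    hT (Subgroup.commutator_mono le_top le_top (hl g hg))
  rw [hxy]
  exact mul_mem (mul_mem hx hy) (list_prod_map_pow_mem_agemo hlT)

def IsRegularPGroup.agemoPreimage (hreg : IsRegularPGroup p P)
    (hT : ⁅(⊤ : Subgroup P), (⊤ : Subgroup P)⁆ ≤ T) : Subgroup P where
  carrier := {x | x ^ p ∈ agemo p T}
  mul_mem' := hreg.mul_pow_mem_agemo hT
  one_mem' := by
    change (1 : P) ^ p ∈ agemo p T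
    rw [one_pow]
    exact one_mem _
  inv_mem' {x} (hx : x ^ p ∈ agemo p T) := by
    change x⁻¹ ^ p ∈ agemo p T
    rw [inv_pow]
    exact inv_mem hx

theorem IsRegularPGroup.le_agemoPreimage (hreg : IsRegularPGroup p P)
    (hT : ⁅(⊤ : Subgroup P), (⊤ : Subgroup P)⁆ ≤ T) : T ≤ hreg.agemoPreimage hT :=
  fun _ hx => pow_mem_agemo hx

theorem IsRegularPGroup.closure_pow_eq_one_le_agemoPreimage (hreg : IsRegularPGroup p P)
    (hT : ⁅(⊤ : Subgroup P), (⊤ : Subgroup P)⁆ ≤ T) :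
    Subgroup.closure {x : P | x ^ p = 1} ≤ hreg.agemoPreimage hT :=
  (Subgroup.closure_le _).2 fun x (hx : x ^ p = 1) => by
    change x ^ p ∈ agemo p T
    rw [hx]
    exact one_mem _

end Agemo

theorem agemo_eq_of_regular_general
    (p : ℕ) (P : Type*) [Group P]
    (hreg : IsRegularPGroup p P)
    (T : Subgroup P)
    (hT : ⁅(⊤ : Subgroup P), (⊤ : Subgroup P)⁆ ≤ T)
    (hgen : T ⊔ Subgroup.closure {x : P | x ^ p = 1} = ⊤) :
    agemo p (⊤ : Subgroup P) = agemo p T := by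
  have hpreimage : hreg.agemoPreimage hT = ⊤ := by
    rw [eq_top_iff, ← hgen]
    exact sup_le (hreg.le_agemoPreimage hT) (hreg.closure_pow_eq_one_le_agemoPreimage hT)
  refine le_antisymm ((Subgroup.closure_le _).2 ?_) (agemo_mono le_top)
  rintro _ ⟨x, -, rfl⟩
  exact (hpreimage ▸ Subgroup.mem_top x : x ∈ hreg.agemoPreimage hT)

/-- Let `P` be a regular `p`-group, `T` a subgroup of `P` containing the derived
subgroup `P'`, with `P = T·Ω₁(P)`.  Then `℧¹(P) = ℧¹(T)`. -/
theorem agemo_eq_of_regular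
    (p : ℕ) (hp : p.Prime) (P : Type*) [Group P] [Finite P]
    (hP : IsPGroup p P) (hreg : IsRegularPGroup p P)
    (T : Subgroup P)
    (hT : ⁅(⊤ : Subgroup P), (⊤ : Subgroup P)⁆ ≤ T)
    (hgen : T ⊔ Subgroup.closure {x : P | x ^ p = 1} = ⊤) :
    agemo p (⊤ : Subgroup P) = agemo p T :=
  agemo_eq_of_regular_general p P hreg T hT hgen
end

section
/- Let p be a prime, G a finite group, V a finite-dimensional GF(p)G-module, W = [V, O^p(G)], and T a Sylow p-subgroup of G. Then W + C_V(T) = W + C_V(G). In particular, if C_V(G) = 0 then C_V(T) ≤ W. -/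
/-!
As `G / O^p(G)` is a `p`-group, `G = O^p(G) T`; hence for `v ∈ C_V(T)` every `g v - v` lies in
`W = [V, O^p(G)]`. The relative trace `∑_{gT ∈ G/T} g v` is then `G`-fixed and congruent to
`|G : T| v` modulo `W`, and `|G : T|` is invertible in `GF(p)`.
-/

/-- `O^p(G)`: the smallest normal subgroup of `G` with `p`-group quotient, realised as
the subgroup generated by all elements of order coprime to `p`. -/
def pResidual (p : ℕ) (G : Type*) [Group G] : Subgroup G :=
  Subgroup.closure {g : G | Nat.Coprime (orderOf g) p}

/-- The fixed points `C_V(H)` of a subgroup `H ≤ G` on a representation `V`. -/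
def repFixedPoints (p : ℕ) {G : Type*} [Group G] {V : Type*} [AddCommGroup V]
    [Module (ZMod p) V] (ρ : Representation (ZMod p) G V) (H : Subgroup G) :
    Submodule (ZMod p) V where
  carrier := {v | ∀ g ∈ H, ρ g v = v}
  add_mem' := by
    intro a b ha hb g hg
    rw [map_add, ha g hg, hb g hg]
  zero_mem' := fun g _ => map_zero (ρ g)
  smul_mem' := by
    intro c a ha g hg
    rw [map_smul, ha g hg]

instance pResidual_normal (p : ℕ) (G : Type*) [Group G] : (pResidual p G).Normal where
  conj_mem n hn g := by
    have : pResidual p G ≤ (pResidual p G).comap (MulAut.conj g).toMonoidHom :=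
      Subgroup.closure_le _ |>.2 fun x hx => Subgroup.subset_closure <| by
        simpa only [Set.mem_ofPred_eq, MulEquiv.coe_toMonoidHom, MulEquiv.orderOf_eq] using hx
    exact this hn

theorem isPGroup_quotient_pResidual {p : ℕ} (hp : p.Prime) (G : Type*) [Group G] [Finite G] :
    IsPGroup p (G ⧸ pResidual p G) := by
  intro q
  obtain ⟨g, rfl⟩ := QuotientGroup.mk_surjective q
  refine ⟨(orderOf g).factorization p, ?_⟩
  rw [← QuotientGroup.mk_pow, QuotientGroup.eq_one_iff]
  apply Subgroup.subset_closure
  show Nat.Coprime (orderOf (g ^ p ^ (orderOf g).factorization p)) p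
  rw [orderOf_pow, Nat.gcd_eq_right (Nat.ordProj_dvd _ p)]
  exact (Nat.coprime_ordCompl hp (orderOf_pos g).ne').symm

theorem Sylow.normal_sup_eq_top_of_isPGroup_quotient {p : ℕ} [Fact p.Prime] {G : Type*} [Group G]
    [Finite G] {N : Subgroup G} [N.Normal] (hN : IsPGroup p (G ⧸ N)) (P : Sylow p G) :
    N ⊔ P = ⊤ := by
  have hmap : (P : Subgroup G).map (QuotientGroup.mk' N) = ⊤ :=
    ((P.mapSurjective (QuotientGroup.mk'_surjective N)).is_maximal' (hN.to_subgroup ⊤)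
      le_top).symm
  rw [sup_comm, ← QuotientGroup.ker_mk' N, ← Subgroup.comap_map_eq, hmap, Subgroup.comap_top]

section Representation

variable {p : ℕ} {G : Type*} [Group G] {V : Type*} [AddCommGroup V] [Module (ZMod p) V]
  (ρ : Representation (ZMod p) G V)

theorem repFixedPoints_anti {H K : Subgroup G} (hHK : H ≤ K) :
    repFixedPoints p ρ K ≤ repFixedPoints p ρ H :=
  fun _ hv g hg => hv g (hHK hg)

theorem sub_mem_span_of_normal_sup_eq_top {N H : Subgroup G} [N.Normal] (hNH : N ⊔ H = ⊤)
    {v : V} (hv : v ∈ repFixedPoints p ρ H) (g : G) :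
    ρ g v - v ∈ Submodule.span (ZMod p) {w : V | ∃ n ∈ N, ∃ u : V, w = ρ n u - u} := by
  have hg : g ∈ (↑(N ⊔ H) : Set G) := hNH ▸ Subgroup.mem_top g
  rw [Subgroup.normal_mul] at hg
  obtain ⟨n, hn, h, hh, rfl⟩ := hg
  rw [map_mul, Module.End.mul_apply, hv h hh]
  exact Submodule.subset_span ⟨n, hn, v, rfl⟩

/-- Computed on chosen coset representatives, so independent of the choice only for `H`-fixed
`v`. -/
noncomputable def relTrace (H : Subgroup G) [Fintype (G ⧸ H)] (v : V) : V :=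
  ∑ x : G ⧸ H, ρ x.out v

theorem index_smul_eq_relTrace_sub (H : Subgroup G) [Fintype (G ⧸ H)] (v : V) :
    H.index • v = relTrace ρ H v - ∑ x : G ⧸ H, (ρ x.out v - v) := by
  rw [relTrace, Finset.sum_sub_distrib, sub_sub_cancel, Finset.sum_const, Finset.card_univ,
    Subgroup.index_eq_card, Nat.card_eq_fintype_card]

variable {ρ}

theorem apply_out_smul_of_mem_repFixedPoints {H : Subgroup G} {v : V}
    (hv : v ∈ repFixedPoints p ρ H) (g : G) (x : G ⧸ H) :
    ρ (g • x).out v = ρ g (ρ x.out v) := by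
  have hcoset : (g * x.out)⁻¹ * (g • x).out ∈ H := by
    rw [← QuotientGroup.eq, QuotientGroup.out_eq', ← smul_eq_mul,
      ← MulAction.Quotient.smul_mk, QuotientGroup.out_eq']
  calc ρ (g • x).out v = ρ (g * x.out) (ρ ((g * x.out)⁻¹ * (g • x).out) v) := by
        rw [← Module.End.mul_apply, ← map_mul, mul_inv_cancel_left]
    _ = ρ g (ρ x.out v) := by rw [hv _ hcoset, map_mul, Module.End.mul_apply]

theorem relTrace_mem_repFixedPoints_top {H : Subgroup G} [Fintype (G ⧸ H)] {v : V}
    (hv : v ∈ repFixedPoints p ρ H) : relTrace ρ H v ∈ repFixedPoints p ρ ⊤ := by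
  intro g _
  rw [relTrace, map_sum]
  simp_rw [← apply_out_smul_of_mem_repFixedPoints hv g]
  exact Fintype.sum_equiv (MulAction.toPerm g) _ _ fun _ => rfl

theorem mem_sup_repFixedPoints_top_of_sub_mem [Fact p.Prime] {H : Subgroup G} [H.FiniteIndex]
    (hH : ¬ p ∣ H.index) (M : Submodule (ZMod p) V) {v : V} (hv : v ∈ repFixedPoints p ρ H)
    (hM : ∀ g, ρ g v - v ∈ M) : v ∈ M ⊔ repFixedPoints p ρ ⊤ := by
  have := H.fintypeQuotientOfFiniteIndex
  have hunit : (H.index : ZMod p) ≠ 0 := by rwa [Ne, ZMod.natCast_eq_zero_iff]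
  have hsum : H.index • v ∈ M ⊔ repFixedPoints p ρ ⊤ :=
    index_smul_eq_relTrace_sub ρ H v ▸ Submodule.sub_mem _
      (Submodule.mem_sup_right (relTrace_mem_repFixedPoints_top hv))
      (Submodule.mem_sup_left (Submodule.sum_mem _ fun x _ => hM x.out))
  rw [← Nat.cast_smul_eq_nsmul (ZMod p)] at hsum
  simpa [smul_smul, inv_mul_cancel₀ hunit] using Submodule.smul_mem _ (H.index : ZMod p)⁻¹ hsum

end Representation

/-- Gaschütz-type consequence: for a `GF(p)G`-module `V` with `W = [V, O^p(G)]` and a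
Sylow `p`-subgroup `T` of `G`, one has `W + C_V(T) = W + C_V(G)`; in particular, if
`C_V(G) = 0` then `C_V(T) ≤ W`. -/
theorem commutator_sup_fixed_points_eq
    (p : ℕ) (hp : p.Prime) (G : Type*) [Group G] [Finite G]
    (V : Type*) [AddCommGroup V] [Module (ZMod p) V]
    (ρ : Representation (ZMod p) G V) (T : Sylow p G) :
    (Submodule.span (ZMod p) {w : V | ∃ g ∈ pResidual p G, ∃ v : V, w = ρ g v - v} ⊔
        repFixedPoints p ρ (T : Subgroup G) =
      Submodule.span (ZMod p) {w : V | ∃ g ∈ pResidual p G, ∃ v : V, w = ρ g v - v} ⊔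
        repFixedPoints p ρ ⊤) ∧
    (repFixedPoints p ρ ⊤ = ⊥ →
      repFixedPoints p ρ (T : Subgroup G) ≤
        Submodule.span (ZMod p) {w : V | ∃ g ∈ pResidual p G, ∃ v : V, w = ρ g v - v}) := by
  have := Fact.mk hp
  have hsup : pResidual p G ⊔ T = ⊤ :=
    T.normal_sup_eq_top_of_isPGroup_quotient (isPGroup_quotient_pResidual hp G)
  have hfixed : repFixedPoints p ρ T ≤
      Submodule.span (ZMod p) {w : V | ∃ g ∈ pResidual p G, ∃ v : V, w = ρ g v - v} ⊔
        repFixedPoints p ρ ⊤ := fun v hv =>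
    mem_sup_repFixedPoints_top_of_sub_mem T.not_dvd_index _ hv
      (sub_mem_span_of_normal_sup_eq_top ρ hsup hv)
  refine ⟨le_antisymm (sup_le le_sup_left hfixed)
    (sup_le_sup_left (repFixedPoints_anti ρ le_top) _), fun hbot => ?_⟩
  simpa only [hbot, sup_bot_eq] using hfixed
end
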